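/- Let N, M ≥ 2, let e₀, e₁ be orthonormal vectors in C^N and f₀, f₁ orthonormal vectors in C^M, and let |ψ⟩ = (e₀ ⊗ f₁ + e₁ ⊗ f₀)/√2 be a maximally entangled two-dimensional state. Then for every p with 0 < p ≤ 1, the mixed state ρ = p |ψ⟩⟨ψ| + (1 − p) |e₁ ⊗ f₁⟩⟨e₁ ⊗ f₁| on C^N ⊗ C^M is entangled. Consequently, the tripartite state |φ⟩ = (β₁|0, N, M⟩ + β₂|1, 0, M⟩ + β₃|1, N, 0⟩)/√α (with all β_i ≠ 0) is robust against the loss of the qubit. -/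

import Mathlib

open scoped Kronecker ComplexConjugate ComplexOrder Matrix

noncomputable section

/-- A density matrix: positive semidefinite with trace 1. -/
def IsDensity {n : Type} [Fintype n] [DecidableEq n] (ρ : Matrix n n ℂ) : Prop :=
  ρ.PosSemidef ∧ ρ.trace = 1

/-- Separability of a bipartite density matrix: a finite convex combination of
tensor (Kronecker) products of density matrices. -/
def Separable {n m : Type} [Fintype n] [DecidableEq n] [Fintype m] [DecidableEq m]
    (ρ : Matrix (n × m) (n × m) ℂ) : Prop :=
  ∃ (L : ℕ) (p : Fin L → ℝ) (A : Fin L → Matrix n n ℂ) (B : Fin L → Matrix m m ℂ),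
    (∀ i, 0 < p i) ∧ (∑ i, p i) = 1 ∧ (∀ i, IsDensity (A i)) ∧ (∀ i, IsDensity (B i)) ∧
    ρ = ∑ i, (p i : ℂ) • (A i ⊗ₖ B i)

/-- Partial trace over the first tensor factor. -/
def ptraceFst {k n : Type} [Fintype k] (ρ : Matrix (k × n) (k × n) ℂ) : Matrix n n ℂ :=
  fun i j => ∑ a, ρ (a, i) (a, j)

/-- Partial trace over the second tensor factor. -/
def ptraceSnd {n m : Type} [Fintype m] (ρ : Matrix (n × m) (n × m) ℂ) : Matrix n n ℂ :=
  fun i j => ∑ b, ρ (i, b) (j, b)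

/-- The rank-one projection |ψ⟩⟨ψ|. -/
def proj {n : Type} (ψ : n → ℂ) : Matrix n n ℂ := Matrix.vecMulVec ψ (star ψ)

/-- Partial transpose with respect to the first tensor factor. -/
def ptransposeFst {n m : Type} (ρ : Matrix (n × m) (n × m) ℂ) : Matrix (n × m) (n × m) ℂ :=
  fun x y => ρ (y.1, x.2) (x.1, y.2)

/-!
A separable state has a positive semidefinite partial transpose (Peres). For a positive
semidefinite `P`, `⟨x, P x⟩ = 0` forces `P x = 0`; evaluated on product vectors, this says that
for separable `ρ`, `⟨a ⊗ b, ρ (a ⊗ b)⟩ = 0` implies `⟨a ⊗ d, ρ (c ⊗ b)⟩ = 0`.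
The state `|u⟩⟨u| + |v⟩⟨v|` with `u = μ e₀ ⊗ f₁ + ν e₁ ⊗ f₀` and `v ∥ e₁ ⊗ f₁` has no weight on
`e₀ ⊗ f₀`, yet its coherence `⟨e₀ ⊗ f₁, ρ (e₁ ⊗ f₀)⟩ = μ ν̄` is nonzero. Both the mixture
`p |ψ⟩⟨ψ| + (1 - p) |e₁ ⊗ f₁⟩⟨e₁ ⊗ f₁|` and the reduced state of `φ` are of this form.
-/

def kronVec {n m : Type} (a : n → ℂ) (b : m → ℂ) : n × m → ℂ := fun x => a x.1 * b x.2

infixl:100 " ⊗ᵥ " => kronVec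

section

variable {n m : Type}

lemma star_kronVec (a : n → ℂ) (b : m → ℂ) : star (a ⊗ᵥ b) = star a ⊗ᵥ star b := by
  ext x
  simp [kronVec]

lemma smul_proj_of_nonneg {r : ℝ} (hr : 0 ≤ r) (u : n → ℂ) :
    (r : ℂ) • proj u = proj ((Real.sqrt r : ℂ) • u) := by
  ext x y
  simp only [proj, Matrix.smul_apply, Matrix.vecMulVec_apply, Pi.smul_apply, star_smul,
    Complex.star_def, Complex.conj_ofReal, smul_eq_mul]
  rw [mul_mul_mul_comm, ← Complex.ofReal_mul, Real.mul_self_sqrt hr]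

lemma ptraceFst_proj {k : Type} [Fintype k] (φ : k × n → ℂ) :
    ptraceFst (proj φ) = ∑ a, proj (fun x => φ (a, x)) := by
  ext i j
  simp [ptraceFst, proj, Matrix.sum_apply, Matrix.vecMulVec_apply]

lemma ptransposeFst_kronecker (A : Matrix n n ℂ) (B : Matrix m m ℂ) :
    ptransposeFst (A ⊗ₖ B) = Aᵀ ⊗ₖ B := by
  ext x y
  simp [ptransposeFst, Matrix.kroneckerMap_apply]

lemma ptransposeFst_sum_smul {L : ℕ} (c : Fin L → ℂ) (ρ : Fin L → Matrix (n × m) (n × m) ℂ) :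
    ptransposeFst (∑ i, c i • ρ i) = ∑ i, c i • ptransposeFst (ρ i) := by
  ext x y
  simp [ptransposeFst, Matrix.sum_apply]

variable [Fintype n] [Fintype m]

lemma star_dotProduct_self_eq_one {v : n → ℂ} (hv : ∑ i, ‖v i‖ ^ 2 = 1) : star v ⬝ᵥ v = 1 := by
  simp only [dotProduct, Pi.star_apply, Complex.star_def, Complex.conj_mul']
  exact_mod_cast hv

lemma star_dotProduct_proj_mulVec (u x y : n → ℂ) :
    star x ⬝ᵥ (proj u *ᵥ y) = (star x ⬝ᵥ u) * (star u ⬝ᵥ y) := by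
  rw [proj, Matrix.vecMulVec_mulVec, dotProduct_smul, MulOpposite.smul_eq_mul_unop,
    MulOpposite.unop_op]

lemma star_kronVec_dotProduct_kronVec (a c : n → ℂ) (b d : m → ℂ) :
    star (a ⊗ᵥ b) ⬝ᵥ (c ⊗ᵥ d) = (star a ⬝ᵥ c) * (star b ⬝ᵥ d) := by
  simp only [star_kronVec, dotProduct, kronVec, Fintype.sum_prod_type, Finset.sum_mul_sum]
  exact Finset.sum_congr rfl fun _ _ => Finset.sum_congr rfl fun _ _ => by ring

lemma star_kronVec_dotProduct_ptransposeFst_mulVec (ρ : Matrix (n × m) (n × m) ℂ)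
    (a c : n → ℂ) (b d : m → ℂ) :
    star (a ⊗ᵥ b) ⬝ᵥ (ptransposeFst ρ *ᵥ (c ⊗ᵥ d)) =
      star (star c ⊗ᵥ b) ⬝ᵥ (ρ *ᵥ (star a ⊗ᵥ d)) := by
  simp only [dotProduct, Matrix.mulVec, ptransposeFst, kronVec, Pi.star_apply, Finset.mul_sum,
    Fintype.sum_prod_type]
  refine (Finset.sum_congr rfl fun _ _ => Finset.sum_comm).trans (Finset.sum_comm.trans ?_)
  refine Finset.sum_congr rfl fun _ _ => Finset.sum_comm.trans ?_
  refine Finset.sum_congr rfl fun _ _ => Finset.sum_congr rfl fun _ _ =>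
    Finset.sum_congr rfl fun _ _ => ?_
  simp only [star_mul', star_star]
  ring

variable [DecidableEq n] [DecidableEq m]

/-- The Peres–Horodecki criterion. -/
theorem Separable.posSemidef_ptransposeFst {ρ : Matrix (n × m) (n × m) ℂ} (hρ : Separable ρ) :
    (ptransposeFst ρ).PosSemidef := by
  obtain ⟨L, p, A, B, hp, -, hA, hB, rfl⟩ := hρ
  rw [ptransposeFst_sum_smul]
  refine Matrix.posSemidef_sum _ fun i _ => ?_
  rw [ptransposeFst_kronecker]
  exact ((hA i).1.transpose.kronecker (hB i).1).smul (Complex.zero_le_real.2 (hp i).le)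

theorem Separable.star_kronVec_dotProduct_mulVec_eq_zero {ρ : Matrix (n × m) (n × m) ℂ}
    (hρ : Separable ρ) {a c : n → ℂ} {b d : m → ℂ}
    (h : star (a ⊗ᵥ b) ⬝ᵥ (ρ *ᵥ (a ⊗ᵥ b)) = 0) :
    star (a ⊗ᵥ d) ⬝ᵥ (ρ *ᵥ (c ⊗ᵥ b)) = 0 := by
  have hΓ : ptransposeFst ρ *ᵥ (star a ⊗ᵥ b) = 0 :=
    (hρ.posSemidef_ptransposeFst.dotProduct_mulVec_zero_iff _).1 <| by
      rwa [star_kronVec_dotProduct_ptransposeFst_mulVec, star_star]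
  simpa [hΓ] using (star_kronVec_dotProduct_ptransposeFst_mulVec ρ (star c) (star a) d b).symm

theorem not_separable_proj_add_proj {e0 e1 : n → ℂ} {f0 f1 : m → ℂ}
    (he0 : star e0 ⬝ᵥ e0 = 1) (he1 : star e1 ⬝ᵥ e1 = 1) (he : star e0 ⬝ᵥ e1 = 0)
    (hf0 : star f0 ⬝ᵥ f0 = 1) (hf1 : star f1 ⬝ᵥ f1 = 1) (hf : star f0 ⬝ᵥ f1 = 0)
    {μ ν : ℂ} (hμ : μ ≠ 0) (hν : ν ≠ 0) (lam : ℂ) :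
    ¬ Separable (proj (μ • e0 ⊗ᵥ f1 + ν • e1 ⊗ᵥ f0) + proj (lam • e1 ⊗ᵥ f1)) := by
  have he' : star e1 ⬝ᵥ e0 = 0 := by rw [Matrix.star_dotProduct, he, star_zero]
  have hf' : star f1 ⬝ᵥ f0 = 0 := by rw [Matrix.star_dotProduct, hf, star_zero]
  intro hρ
  have key := hρ.star_kronVec_dotProduct_mulVec_eq_zero (a := e0) (b := f0) (c := e1) (d := f1)
  simp [Matrix.add_mulVec, star_dotProduct_proj_mulVec, dotProduct_add, add_dotProduct,
    star_kronVec_dotProduct_kronVec, he0, he1, he, he', hf0, hf1, hf, hf', hμ, hν] at key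

end

theorem stmt8_general (N M : ℕ)
    (e0 e1 : Fin N → ℂ) (f0 f1 : Fin M → ℂ)
    (he0 : ∑ i, ‖e0 i‖ ^ 2 = 1) (he1 : ∑ i, ‖e1 i‖ ^ 2 = 1)
    (hf0 : ∑ j, ‖f0 j‖ ^ 2 = 1) (hf1 : ∑ j, ‖f1 j‖ ^ 2 = 1)
    (he : ∑ i, conj (e0 i) * e1 i = 0) (hf : ∑ j, conj (f0 j) * f1 j = 0)
    (ψ : Fin N × Fin M → ℂ)
    (hψ : ψ = fun x => ((Real.sqrt 2 : ℂ))⁻¹ * (e0 x.1 * f1 x.2 + e1 x.1 * f0 x.2)) :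
    (∀ p : ℝ, 0 < p → p ≤ 1 →
      ¬ Separable ((p : ℂ) • proj ψ +
        ((1 - p : ℝ) : ℂ) • proj (fun x : Fin N × Fin M => e1 x.1 * f1 x.2))) ∧
    (∀ β1 β2 β3 : ℂ, β1 ≠ 0 → β2 ≠ 0 → β3 ≠ 0 →
      ¬ Separable (ptraceFst (proj (fun x : Fin 2 × (Fin N × Fin M) =>
        ((Real.sqrt (‖β1‖ ^ 2 + ‖β2‖ ^ 2 + ‖β3‖ ^ 2) : ℂ))⁻¹ *
          (β1 * (if x.1 = 0 then 1 else 0) * e1 x.2.1 * f1 x.2.2 +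
           β2 * (if x.1 = 1 then 1 else 0) * e0 x.2.1 * f1 x.2.2 +
           β3 * (if x.1 = 1 then 1 else 0) * e1 x.2.1 * f0 x.2.2))))) := by
  have key {μ ν : ℂ} (hμ : μ ≠ 0) (hν : ν ≠ 0) (lam : ℂ) :=
    not_separable_proj_add_proj (star_dotProduct_self_eq_one he0) (star_dotProduct_self_eq_one he1)
      he (star_dotProduct_self_eq_one hf0) (star_dotProduct_self_eq_one hf1) hf hμ hν lam
  constructor
  · intro p hp hp1
    set μ : ℂ := Real.sqrt p * (Real.sqrt 2 : ℂ)⁻¹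
    have hμ : μ ≠ 0 := by simp [μ, (Real.sqrt_pos.2 hp).ne']
    have hψμ : (Real.sqrt p : ℂ) • ψ = μ • e0 ⊗ᵥ f1 + μ • e1 ⊗ᵥ f0 := by
      ext x
      simp only [hψ, μ, kronVec, Pi.add_apply, Pi.smul_apply, smul_eq_mul]
      ring
    rw [smul_proj_of_nonneg hp.le, smul_proj_of_nonneg (sub_nonneg.2 hp1), hψμ]
    exact key hμ hμ _
  · intro β1 β2 β3 _ h2 h3
    set c : ℂ := (Real.sqrt (‖β1‖ ^ 2 + ‖β2‖ ^ 2 + ‖β3‖ ^ 2) : ℂ)⁻¹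
    have hc : c ≠ 0 := by
      have : 0 < ‖β1‖ ^ 2 + ‖β2‖ ^ 2 + ‖β3‖ ^ 2 := by positivity
      simp [c, (Real.sqrt_pos.2 this).ne']
    rw [ptraceFst_proj, Fin.sum_univ_two, add_comm]
    convert key (mul_ne_zero hc h2) (mul_ne_zero hc h3) (c * β1) using 4 <;> ext x <;>
      simp only [Fin.isValue, one_ne_zero, zero_ne_one, ↓reduceIte, mul_zero, zero_mul, mul_one,
        zero_add, add_zero, Pi.add_apply, Pi.smul_apply, kronVec, smul_eq_mul] <;> ring

/-- For orthonormal `e₀, e₁ ∈ ℂ^N`, `f₀, f₁ ∈ ℂ^M` and the maximally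
entangled state `|ψ⟩ = (e₀ ⊗ f₁ + e₁ ⊗ f₀)/√2`, the state
`ρ = p |ψ⟩⟨ψ| + (1 − p)|e₁ ⊗ f₁⟩⟨e₁ ⊗ f₁|` is entangled for every `0 < p ≤ 1`.
Consequently the tripartite state
`|φ⟩ = (β₁|0⟩⊗e₁⊗f₁ + β₂|1⟩⊗e₀⊗f₁ + β₃|1⟩⊗e₁⊗f₀)/√α` (all `β_i ≠ 0`,
`α = |β₁|² + |β₂|² + |β₃|²`) is robust against the loss of the qubit. -/
theorem stmt8 (N M : ℕ) (hN : 2 ≤ N) (hM : 2 ≤ M)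
    (e0 e1 : Fin N → ℂ) (f0 f1 : Fin M → ℂ)
    (he0 : ∑ i, ‖e0 i‖ ^ 2 = 1) (he1 : ∑ i, ‖e1 i‖ ^ 2 = 1)
    (hf0 : ∑ j, ‖f0 j‖ ^ 2 = 1) (hf1 : ∑ j, ‖f1 j‖ ^ 2 = 1)
    (he : ∑ i, conj (e0 i) * e1 i = 0) (hf : ∑ j, conj (f0 j) * f1 j = 0)
    (ψ : Fin N × Fin M → ℂ)
    (hψ : ψ = fun x => ((Real.sqrt 2 : ℂ))⁻¹ * (e0 x.1 * f1 x.2 + e1 x.1 * f0 x.2)) :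
    (∀ p : ℝ, 0 < p → p ≤ 1 →
      ¬ Separable ((p : ℂ) • proj ψ +
        ((1 - p : ℝ) : ℂ) • proj (fun x : Fin N × Fin M => e1 x.1 * f1 x.2))) ∧
    (∀ β1 β2 β3 : ℂ, β1 ≠ 0 → β2 ≠ 0 → β3 ≠ 0 →
      ¬ Separable (ptraceFst (proj (fun x : Fin 2 × (Fin N × Fin M) =>
        ((Real.sqrt (‖β1‖ ^ 2 + ‖β2‖ ^ 2 + ‖β3‖ ^ 2) : ℂ))⁻¹ *
          (β1 * (if x.1 = 0 then 1 else 0) * e1 x.2.1 * f1 x.2.2 +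
           β2 * (if x.1 = 1 then 1 else 0) * e0 x.2.1 * f1 x.2.2 +
           β3 * (if x.1 = 1 then 1 else 0) * e1 x.2.1 * f0 x.2.2))))) :=
  stmt8_general N M e0 e1 f0 f1 he0 he1 hf0 hf1 he hf ψ hψ
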